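/- Consider a PJR-Exact run of an approval-based multi-winner election, fix j with 1 ≤ j ≤ k−1, and suppose the first j iterations of the run are all normal. Then after these j iterations no candidate in C \ W_j is in a starving state. -/

import Mathlib

open Finset

variable {C : Type*} [Fintype C] [DecidableEq C]

/-- The voters approving candidate `c`. -/
def approvers {n : ℕ} (A : Fin n → Finset C) (c : C) : Finset (Fin n) :=
  Finset.univ.filter (fun i => c ∈ A i)

/-- The exact quota `q = n / k`. -/
def quota (n k : ℕ) : ℚ := (n : ℚ) / (k : ℚ)

/-- Remaining support of candidate `c` under vote fractions `f`. -/
def supp {n : ℕ} (A : Fin n → Finset C) (f : Fin n → ℚ) (c : C) : ℚ :=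
  ∑ i ∈ approvers A c, f i

/-- The set `W_j = {w_1, …, w_j}` of the first `j` winners. -/
def Wset (w : ℕ → C) (j : ℕ) : Finset C := (Finset.Icc 1 j).image w

/-- The candidates approved by every voter in `Ns`, i.e. `⋂_{i ∈ Ns} A i`. -/
def commonApproved {n : ℕ} (A : Fin n → Finset C) (Ns : Finset (Fin n)) : Finset C :=
  Finset.univ.filter (fun c => ∀ i ∈ Ns, c ∈ A i)

/-- `Ns` is an `ℓ`-cohesive group of voters: `|Ns| ≥ ℓ·n/k` and `|⋂_{i ∈ Ns} A i| ≥ ℓ`. -/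
def Cohesive {n : ℕ} (A : Fin n → Finset C) (k ℓ : ℕ) (Ns : Finset (Fin n)) : Prop :=
  (ℓ : ℚ) * (n : ℚ) / (k : ℚ) ≤ (Ns.card : ℚ) ∧ ℓ ≤ (commonApproved A Ns).card

/-- `W` provides proportional justified representation for `(A, k)`. -/
def ProvidesPJR {n : ℕ} (A : Fin n → Finset C) (k : ℕ) (W : Finset C) : Prop :=
  ∀ ℓ : ℕ, 1 ≤ ℓ → ℓ ≤ k → ∀ Ns : Finset (Fin n), Cohesive A k ℓ Ns →
    ℓ ≤ (W ∩ Ns.biUnion A).card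

/-- `W` provides extended justified representation for `(A, k)`. -/
def ProvidesEJR {n : ℕ} (A : Fin n → Finset C) (k : ℕ) (W : Finset C) : Prop :=
  ∀ ℓ : ℕ, 1 ≤ ℓ → ℓ ≤ k → ∀ Ns : Finset (Fin n), Cohesive A k ℓ Ns →
    ∃ i ∈ Ns, ℓ ≤ (A i ∩ W).card

/-- The set of `ℓ`'s satisfying the dissatisfaction-level fixpoint equation
`ℓ = ⌊(k/n)·|{i : c ∈ A_i ∧ |A_i ∩ W| < ℓ}|⌋`
(natural-number division `k * m / n` is exactly the floor `⌊(k/n)·m⌋`). -/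
def dissatSet {n : ℕ} (A : Fin n → Finset C) (k : ℕ) (W : Finset C) (c : C) : Set ℕ :=
  {ℓ : ℕ | ℓ = k * (Finset.univ.filter (fun i => c ∈ A i ∧ (A i ∩ W).card < ℓ)).card / n}

/-- The dissatisfaction level `ℓ(c, W)`: the largest non-negative integer satisfying
the fixpoint equation. -/
noncomputable def dissat {n : ℕ} (A : Fin n → Finset C) (k : ℕ) (W : Finset C) (c : C) : ℕ :=
  sSup (dissatSet A k W c)

/-- `ℓ_W(i, c) = max_{c' ∈ A_i \ (W ∪ {c})} ℓ(c', W)` (with `max ∅ = 0`). -/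
noncomputable def dissatVoter {n : ℕ} (A : Fin n → Finset C) (k : ℕ) (W : Finset C)
    (i : Fin n) (c : C) : ℕ :=
  (A i \ insert c W).sup (dissat A k W)

/-- `ℓ_W(i) = max_{c ∈ A_i \ W} ℓ(c, W)` (with `max ∅ = 0`). -/
noncomputable def dissatVoterAll {n : ℕ} (A : Fin n → Finset C) (k : ℕ) (W : Finset C)
    (i : Fin n) : ℕ :=
  (A i \ W).sup (dissat A k W)

/-- `g_i(c)` relative to the committee `W`. -/
noncomputable def gfun {n : ℕ} (A : Fin n → Finset C) (k : ℕ) (W : Finset C)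
    (i : Fin n) (c : C) : ℚ :=
  if dissatVoter A k W i c ≤ (A i ∩ W).card then 0
  else ((dissatVoter A k W i c : ℚ) - ((A i ∩ W).card : ℚ) - 1) / (dissatVoter A k W i c : ℚ)

/-- Candidate `c ∉ W` is in a normal state (w.r.t. committee `W` and fractions `f`). -/
def NormalState {n : ℕ} (A : Fin n → Finset C) (k : ℕ) (f : Fin n → ℚ) (W : Finset C)
    (c : C) : Prop :=
  (∀ i : Fin n, c ∈ A i → (A i ∩ W).card < dissatVoter A k W i c →
      ((dissatVoter A k W i c : ℚ) - ((A i ∩ W).card : ℚ)) / (dissatVoter A k W i c : ℚ) ≤ f i) ∧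
  quota n k ≤ ∑ i ∈ approvers A c, (f i - gfun A k W i c)

/-- Candidate `c ∉ W` is in a starving state. -/
def StarvingState {n : ℕ} (A : Fin n → Finset C) (k : ℕ) (f : Fin n → ℚ) (W : Finset C)
    (c : C) : Prop :=
  ∃ i : Fin n, c ∈ A i ∧ (A i ∩ W).card < dissatVoter A k W i c ∧
    f i < ((dissatVoter A k W i c : ℚ) - ((A i ∩ W).card : ℚ)) / (dissatVoter A k W i c : ℚ)

/-- Candidate `c ∉ W` is in an eager state. -/
def EagerState {n : ℕ} (A : Fin n → Finset C) (k : ℕ) (f : Fin n → ℚ) (W : Finset C)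
    (c : C) : Prop :=
  ¬ StarvingState A k f W c ∧ quota n k ≤ supp A f c ∧
    ∑ i ∈ approvers A c, (f i - gfun A k W i c) < quota n k

/-- A run of a voting rule in the PJR-Exact family: a sequence of distinct winners
`w 1, …, w k` together with fraction functions `f 0, …, f k` satisfying the three
defining conditions of the family. -/
structure PJRExactRun (n k : ℕ) (A : Fin n → Finset C) where
  w : ℕ → C
  f : ℕ → Fin n → ℚ
  /-- the selected candidates are pairwise distinct -/
  w_inj : ∀ j j' : ℕ, 1 ≤ j → j ≤ k → 1 ≤ j' → j' ≤ k → w j = w j' → j = j'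
  /-- initially each voter has her whole vote -/
  f_zero : ∀ i, f 0 i = 1
  /-- fractions stay non-negative -/
  f_nonneg : ∀ j, 1 ≤ j → j ≤ k → ∀ i, 0 ≤ f j i
  /-- fractions never increase -/
  f_mono : ∀ j, 1 ≤ j → j ≤ k → ∀ i, f j i ≤ f (j - 1) i
  /-- if the remaining support of the winner exceeds the quota, exactly `q` votes are removed -/
  remove_big : ∀ j, 1 ≤ j → j ≤ k → quota n k < supp A (f (j - 1)) (w j) →
    ∑ i ∈ approvers A (w j), (f (j - 1) i - f j i) = quota n k
  /-- if the remaining support of the winner is at most the quota, all of it is removed -/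
  remove_small : ∀ j, 1 ≤ j → j ≤ k → supp A (f (j - 1)) (w j) ≤ quota n k →
    ∀ i, w j ∈ A i → f j i = 0
  /-- voters not approving the winner keep their fractions -/
  f_untouched : ∀ j, 1 ≤ j → j ≤ k → ∀ i, w j ∉ A i → f j i = f (j - 1) i
  /-- if some unelected candidate has remaining support at least `q`,
  then so has the selected one -/
  greedy : ∀ j, 1 ≤ j → j ≤ k →
    (∃ c, c ∉ Wset w (j - 1) ∧ quota n k ≤ supp A (f (j - 1)) c) →
    quota n k ≤ supp A (f (j - 1)) (w j)

/-- Iteration `j` of a PJR-Exact run is normal. -/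
def NormalIteration {n k : ℕ} {A : Fin n → Finset C} (R : PJRExactRun n k A) (j : ℕ) : Prop :=
  NormalState A k (R.f (j - 1)) (Wset R.w (j - 1)) (R.w j) ∧
  ∀ i : Fin n, R.w j ∈ A i →
    (A i ∩ Wset R.w (j - 1)).card < dissatVoter A k (Wset R.w (j - 1)) i (R.w j) →
    ((dissatVoter A k (Wset R.w (j - 1)) i (R.w j) : ℚ) - ((A i ∩ Wset R.w j).card : ℚ)) /
      (dissatVoter A k (Wset R.w (j - 1)) i (R.w j) : ℚ) ≤ R.f j i

/-! A monotone map `f : ℕ → ℕ` that is bounded above has a largest fixed point, namely its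
largest postfixed point (Knaster–Tarski), so every postfixed point lies below some fixed point.
Since `ℓ(c, W)` is the largest fixed point of a map that decreases as `W` grows, it follows that
dissatisfaction levels, and with them the thresholds `(ℓ_j(i,c) − |A_i ∩ W_j|) / ℓ_j(i,c)` of the
starving condition, can only drop from one iteration to the next. A voter who does not approve
`w_{j+1}` keeps her fraction and her representation, so she stays above her threshold; one who
approves it is pushed above a larger threshold by the normality of iteration `j + 1`. -/

lemma le_sSup_fixedPoints_of_le_apply {f : ℕ → ℕ} (hf : Monotone f) {b : ℕ}
    (hb : ∀ x, f x ≤ b) {x : ℕ} (hx : x ≤ f x) : x ≤ sSup {y | y = f y} := by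
  have hbdd : BddAbove {y | y ≤ f y} := ⟨b, fun y hy => hy.trans (hb y)⟩
  set m := sSup {y | y ≤ f y}
  have hm : m ≤ f m := Nat.sSup_mem (s := {y | y ≤ f y}) ⟨0, Nat.zero_le _⟩ hbdd
  have hfix : m = f m := hm.antisymm (le_csSup hbdd (hf hm))
  calc x ≤ m := le_csSup hbdd hx
    _ ≤ sSup {y | y = f y} := le_csSup ⟨b, fun y hy => hy.trans_le (hb y)⟩ hfix

lemma sub_div_self_le_sub_div_self {α : Type*} [Field α] [LinearOrder α] [IsStrictOrderedRing α]
    {a b m : α} (hm : 0 ≤ m) (ha : 0 < a) (hab : a ≤ b) : (a - m) / a ≤ (b - m) / b := by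
  rw [sub_div, sub_div, div_self ha.ne', div_self (ha.trans_le hab).ne']
  gcongr

lemma mul_card_div_le {n : ℕ} (k : ℕ) (s : Finset (Fin n)) : k * #s / n ≤ k := by
  refine Nat.div_le_of_le_mul ?_
  rw [mul_comm n]
  exact Nat.mul_le_mul_left k (card_le_univ s |>.trans_eq (Fintype.card_fin n))

section Dissat

variable {C : Type*} [DecidableEq C] {n : ℕ} (A : Fin n → Finset C) (k : ℕ)

lemma dissat_mem_dissatSet (W : Finset C) (c : C) : dissat A k W c ∈ dissatSet A k W c :=
  Nat.sSup_mem ⟨0, by simp [dissatSet]⟩ ⟨k, fun ℓ hℓ => hℓ.trans_le (mul_card_div_le k _)⟩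

lemma dissat_antitone {W W' : Finset C} (hW : W ⊆ W') (c : C) :
    dissat A k W' c ≤ dissat A k W c := by
  set F : Finset C → ℕ → ℕ := fun V ℓ => k * #{i | c ∈ A i ∧ #(A i ∩ V) < ℓ} / n
  have hF_mono : Monotone (F W) := fun ℓ ℓ' hℓ => by
    simp only [F]
    gcongr
  have hF_anti : F W' (dissat A k W' c) ≤ F W (dissat A k W' c) := by
    simp only [F]
    gcongr
  have hpost : dissat A k W' c ≤ F W (dissat A k W' c) :=
    (dissat_mem_dissatSet A k W' c).le.trans hF_anti
  exact le_sSup_fixedPoints_of_le_apply hF_mono (fun ℓ => mul_card_div_le k _) hpost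

lemma dissatVoter_le_dissatVoter {W W' : Finset C} (hW : W ⊆ W') {i : Fin n} {c c' : C}
    (hA : A i \ insert c' W' ⊆ A i \ insert c W) :
    dissatVoter A k W' i c' ≤ dissatVoter A k W i c :=
  Finset.sup_le fun b hb => (dissat_antitone A k hW b).trans (le_sup (hA hb))

lemma dissatVoter_insert_le (W : Finset C) (i : Fin n) (c x : C) :
    dissatVoter A k (insert x W) i c ≤ dissatVoter A k W i c :=
  dissatVoter_le_dissatVoter A k (subset_insert x W) (sdiff_subset_sdiff subset_rfl (by grind))

lemma dissatVoter_insert_le_self (W : Finset C) (i : Fin n) (c x : C) :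
    dissatVoter A k (insert x W) i c ≤ dissatVoter A k W i x :=
  dissatVoter_le_dissatVoter A k (subset_insert x W) (sdiff_subset_sdiff subset_rfl (by grind))

end Dissat

section Run

variable {C : Type*} [DecidableEq C]

lemma Wset_zero (w : ℕ → C) : Wset w 0 = ∅ := by
  simp [Wset]

lemma Wset_succ (w : ℕ → C) (j : ℕ) : Wset w (j + 1) = insert (w (j + 1)) (Wset w j) := by
  rw [Wset, Wset, ← Order.succ_eq_add_one, ← insert_Icc_right_eq_Icc_succ (by simp), image_insert]

variable {n k : ℕ} {A : Fin n → Finset C} (R : PJRExactRun n k A)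

lemma PJRExactRun.not_starvingState_zero (c : C) :
    ¬ StarvingState A k (R.f 0) (Wset R.w 0) c := by
  rintro ⟨i, -, hlt, hf⟩
  rw [Wset_zero] at hlt hf
  have hL : (dissatVoter A k ∅ i c : ℚ) ≠ 0 := Nat.cast_ne_zero.mpr (Nat.ne_zero_of_lt hlt)
  rw [R.f_zero, inter_empty, card_empty, Nat.cast_zero, sub_zero, div_self hL] at hf
  exact hf.false

lemma PJRExactRun.not_starvingState_succ {j : ℕ} (hjk : j + 1 ≤ k)
    (hnormal : NormalIteration R (j + 1))
    (hprev : ∀ c, ¬ StarvingState A k (R.f j) (Wset R.w j) c) (c : C) :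
    ¬ StarvingState A k (R.f (j + 1)) (Wset R.w (j + 1)) c := by
  rintro ⟨i, hci, hlt, hf⟩
  set L := dissatVoter A k (Wset R.w (j + 1)) i c
  set m := #(A i ∩ Wset R.w (j + 1))
  have hL : (0 : ℚ) < L := by exact_mod_cast (Nat.zero_le m).trans_lt hlt
  by_cases hw : R.w (j + 1) ∈ A i
  · set D := dissatVoter A k (Wset R.w j) i (R.w (j + 1))
    have hLD : L ≤ D := by
      simpa only [L, D, Wset_succ] using dissatVoter_insert_le_self A k _ i c (R.w (j + 1))
    have hm : #(A i ∩ Wset R.w j) ≤ m :=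
      card_le_card (inter_subset_inter_left (Wset_succ R.w j ▸ subset_insert _ _))
    have hD : ((D : ℚ) - m) / D ≤ R.f (j + 1) i :=
      hnormal.2 i hw (hm.trans_lt (hlt.trans_le hLD))
    have := sub_div_self_le_sub_div_self (Nat.cast_nonneg' m) hL (Nat.cast_le.mpr hLD)
    linarith
  · have hf_eq : R.f (j + 1) i = R.f j i := R.f_untouched (j + 1) (by omega) hjk i hw
    have hm : m = #(A i ∩ Wset R.w j) := by
      simp only [m, Wset_succ, inter_insert_of_notMem hw]
    set L' := dissatVoter A k (Wset R.w j) i c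
    have hLL' : L ≤ L' := by
      simpa only [L, L', Wset_succ] using dissatVoter_insert_le A k _ i c (R.w (j + 1))
    have hprev_i : ((L' : ℚ) - m) / L' ≤ R.f j i := by
      by_contra! h
      exact hprev c ⟨i, hci, hm ▸ hlt.trans_le hLL', hm ▸ h⟩
    have := sub_div_self_le_sub_div_self (Nat.cast_nonneg' m) hL (Nat.cast_le.mpr hLL')
    linarith

lemma PJRExactRun.not_starvingState_of_normalIteration {j : ℕ} (hjk : j ≤ k)
    (hnormal : ∀ j' : ℕ, 1 ≤ j' → j' ≤ j → NormalIteration R j') (c : C) :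
    ¬ StarvingState A k (R.f j) (Wset R.w j) c := by
  induction j generalizing c with
  | zero => exact R.not_starvingState_zero c
  | succ j ih =>
    exact R.not_starvingState_succ hjk (hnormal (j + 1) (by omega) le_rfl)
      (ih (by omega) fun j' h1 h2 => hnormal j' h1 (by omega)) c

end Run

theorem normal_iterations_no_starving_general {C : Type*} [DecidableEq C] {n k : ℕ}
    (A : Fin n → Finset C) (R : PJRExactRun n k A)
    (j : ℕ) (hjk : j ≤ k - 1)
    (hnormal : ∀ j' : ℕ, 1 ≤ j' → j' ≤ j → NormalIteration R j') :
    ∀ c : C, c ∉ Wset R.w j → ¬ StarvingState A k (R.f j) (Wset R.w j) c :=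
  fun c _ => R.not_starvingState_of_normalIteration (hjk.trans (Nat.sub_le k 1)) hnormal c

/-- Corollary 1 of the paper: after `j` normal iterations (1 ≤ j ≤ k−1),
no unelected candidate is in a starving state. -/
theorem normal_iterations_no_starving {C : Type*} [Fintype C] [DecidableEq C] {n k : ℕ}
    (hn : 0 < n) (hk : 1 ≤ k) (hkC : k ≤ Fintype.card C)
    (A : Fin n → Finset C) (R : PJRExactRun n k A)
    (j : ℕ) (hj1 : 1 ≤ j) (hjk : j ≤ k - 1)
    (hnormal : ∀ j' : ℕ, 1 ≤ j' → j' ≤ j → NormalIteration R j') :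
    ∀ c : C, c ∉ Wset R.w j → ¬ StarvingState A k (R.f j) (Wset R.w j) c :=
  normal_iterations_no_starving_general A R j hjk hnormal
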